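/- Let Θ ⊆ ℝ^p be a convex set, let f : ℝ^p → ℝ be ρ-weakly convex with ρ > 0, and let ρ̂ ≥ 2ρ. Let θ̄ ∈ ℝ^p, let θ ∈ Θ, and suppose θ̂ ∈ Θ is a minimizer over Θ of θ' ↦ f(θ') + (ρ̂/2)‖θ' − θ̄‖². Suppose v ∈ ℝ^p satisfies the weak-convexity subgradient inequality f(y) ≥ f(θ) + ⟨v, y − θ⟩ − (ρ/2)‖y − θ‖² for all y ∈ ℝ^p. Then ⟨θ − θ̂, v⟩ ≥ (ρ̂/2)‖θ̂ − θ̄‖² − (ρ̂/2)‖θ − θ̄‖². -/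

import Mathlib

/-!
Adding `(μ/2)‖· - c‖²` to a `ρ`-weakly convex function gives a `(μ - ρ)`-strongly convex one, so
the proximal objective `F = f + (ρ̂/2)‖· - θ̄‖²` grows quadratically away from its minimizer over
the convex set: `F θ̂ + ((ρ̂ - ρ)/2)‖θ - θ̂‖² ≤ F θ`. Subtracting the subgradient inequality at
`y = θ̂` leaves `((ρ̂ - 2ρ)/2)‖θ - θ̂‖² ≥ 0` as the error term.
-/

open Filter Set Topology
open scoped InnerProductSpace

variable {E : Type*} [NormedAddCommGroup E] [InnerProductSpace ℝ E]

lemma ConvexOn.strongConvexOn_add_sq_norm_sub {s : Set E} {f : E → ℝ} {ρ : ℝ}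
    (hf : ConvexOn ℝ s fun x ↦ f x + ρ / 2 * ‖x‖ ^ 2) (μ : ℝ) (c : E) :
    StrongConvexOn s (μ - ρ) fun x ↦ f x + μ / 2 * ‖x - c‖ ^ 2 := by
  rw [strongConvexOn_iff_convex]
  have hlin : ConvexOn ℝ s fun x ↦ -μ * ⟪c, x⟫_ℝ + μ / 2 * ‖c‖ ^ 2 :=
    (((-μ) • innerₛₗ ℝ c).convexOn hf.1).add_const _
  refine (hf.add hlin).congr fun x _ ↦ ?_
  simp only [Pi.add_apply, norm_sub_sq_real, real_inner_comm x c]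
  ring

lemma StrongConvexOn.add_sq_norm_sub_le_of_isMinOn {s : Set E} {m : ℝ} {F : E → ℝ} {x y : E}
    (hF : StrongConvexOn s m F) (hx : x ∈ s) (hmin : IsMinOn F s x) (hy : y ∈ s) :
    F x + m / 2 * ‖y - x‖ ^ 2 ≤ F y := by
  have hsegment : ∀ t ∈ Ioc (0 : ℝ) 1, F x + (1 - t) * (m / 2 * ‖y - x‖ ^ 2) ≤ F y := by
    rintro t ⟨ht₀, ht₁⟩
    have hconv := hF.2 hy hx ht₀.le (sub_nonneg.2 ht₁) (add_sub_cancel t 1)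
    have hle := isMinOn_iff.1 hmin _ (hF.1 hy hx ht₀.le (sub_nonneg.2 ht₁) (add_sub_cancel t 1))
    simp only [smul_eq_mul] at hconv
    have hscaled : t * (F x + (1 - t) * (m / 2 * ‖y - x‖ ^ 2)) ≤ t * F y := by linarith
    exact le_of_mul_le_mul_left hscaled ht₀
  have hlim : Tendsto (fun t : ℝ ↦ F x + (1 - t) * (m / 2 * ‖y - x‖ ^ 2)) (𝓝[>] 0)
      (𝓝 (F x + m / 2 * ‖y - x‖ ^ 2)) :=
    ((by fun_prop : Continuous fun t : ℝ ↦ F x + (1 - t) * (m / 2 * ‖y - x‖ ^ 2)).tendsto'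
      0 _ (by simp)).mono_left nhdsWithin_le_nhds
  exact le_of_tendsto hlim (mem_of_superset (Ioc_mem_nhdsGT one_pos) hsegment)

theorem stmt11_general (p : ℕ) (Θ : Set (EuclideanSpace ℝ (Fin p))) (hΘ : Convex ℝ Θ)
    (f : EuclideanSpace ℝ (Fin p) → ℝ) (ρ ρh : ℝ) (hρh : 2 * ρ ≤ ρh)
    (hwc : ConvexOn ℝ Set.univ (fun x => f x + (ρ / 2) * ‖x‖ ^ 2))
    (θbar : EuclideanSpace ℝ (Fin p)) (θ : EuclideanSpace ℝ (Fin p)) (hθ : θ ∈ Θ)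
    (θhat : EuclideanSpace ℝ (Fin p)) (hmem : θhat ∈ Θ)
    (hmin : ∀ θ' ∈ Θ,
      f θhat + (ρh / 2) * ‖θhat - θbar‖ ^ 2 ≤ f θ' + (ρh / 2) * ‖θ' - θbar‖ ^ 2)
    (v : EuclideanSpace ℝ (Fin p))
    (hsub : ∀ y, f y ≥ f θ + ⟪v, y - θ⟫_ℝ - (ρ / 2) * ‖y - θ‖ ^ 2) :
    ⟪θ - θhat, v⟫_ℝ ≥ (ρh / 2) * ‖θhat - θbar‖ ^ 2 - (ρh / 2) * ‖θ - θbar‖ ^ 2 := by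
  have hgrowth := ((hwc.subset (subset_univ Θ) hΘ).strongConvexOn_add_sq_norm_sub ρh θbar
    ).add_sq_norm_sub_le_of_isMinOn hmem (isMinOn_iff.2 hmin) hθ
  have hsubgrad := hsub θhat
  rw [← neg_sub θ θhat, inner_neg_right, real_inner_comm, norm_neg] at hsubgrad
  nlinarith [sq_nonneg ‖θ - θhat‖]

/-- If `f` is `ρ`-weakly convex (`ρ > 0`), `ρ̂ ≥ 2ρ`, `θ ∈ Θ` (convex),
`θ̂ ∈ Θ` minimizes `θ' ↦ f θ' + (ρ̂/2)‖θ' − θ̄‖²` over `Θ`, and `v` is a weak-convexity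
subgradient of `f` at `θ`, then `⟨θ − θ̂, v⟩ ≥ (ρ̂/2)‖θ̂ − θ̄‖² − (ρ̂/2)‖θ − θ̄‖²`. -/
theorem stmt11 (p : ℕ) (Θ : Set (EuclideanSpace ℝ (Fin p))) (hΘ : Convex ℝ Θ)
    (f : EuclideanSpace ℝ (Fin p) → ℝ) (ρ ρh : ℝ) (hρ : 0 < ρ) (hρh : 2 * ρ ≤ ρh)
    (hwc : ConvexOn ℝ Set.univ (fun x => f x + (ρ / 2) * ‖x‖ ^ 2))
    (θbar : EuclideanSpace ℝ (Fin p)) (θ : EuclideanSpace ℝ (Fin p)) (hθ : θ ∈ Θ)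
    (θhat : EuclideanSpace ℝ (Fin p)) (hmem : θhat ∈ Θ)
    (hmin : ∀ θ' ∈ Θ,
      f θhat + (ρh / 2) * ‖θhat - θbar‖ ^ 2 ≤ f θ' + (ρh / 2) * ‖θ' - θbar‖ ^ 2)
    (v : EuclideanSpace ℝ (Fin p))
    (hsub : ∀ y, f y ≥ f θ + ⟪v, y - θ⟫_ℝ - (ρ / 2) * ‖y - θ‖ ^ 2) :
    ⟪θ - θhat, v⟫_ℝ ≥ (ρh / 2) * ‖θhat - θbar‖ ^ 2 - (ρh / 2) * ‖θ - θbar‖ ^ 2 :=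
  stmt11_general p Θ hΘ f ρ ρh hρh hwc θbar θ hθ θhat hmem hmin v hsub
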